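/- Let X be a compact metric space, f : X → X a continuous map, and μ an f-invariant Borel probability measure on X satisfying exponential large deviations for Lipschitz observables. Let d ≥ 1 and let A : X → (ℝ^d →L[ℝ] ℝ^d) be continuous with A x invertible for every x ∈ X and with x ↦ (A x)⁻¹ continuous. Let E assign to each x ∈ X a nonzero linear subspace E x of ℝ^d such that (A x) maps E x into E (f x) for every x, and assume the family E is sequentially upper semicontinuous on X. Define γ n x = Real.log (sup { ‖(A^n x) u‖ : u ∈ E x, ‖u‖ = 1 }) and λ = inf over integers n ≥ 1 of (1/n) ∫ γ n dμ. Then for every ε > 0 there exist constants C > 0 and c > 0 such that μ { x ∈ X : γ n x ≥ n · (λ + ε) } ≤ C · Real.exp (−c · n) for all integers n ≥ 1. -/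

import Mathlib

/-!
The functions `γ n` form a subadditive cocycle over `f`: restricted norms are submultiplicative
because `A x` maps `E x` into `E (f x)`. They satisfy `|γ n| ≤ n log K` with `K` bounding `A` and
its inverse, and each `γ n` is upper semicontinuous, because the supremum is attained on the compact
unit sphere of `E x` and limits of unit vectors of `E x_m` lie in `E x`.

Fix `k` with `∫ γ k / k < λ + ε`. Averaging the splittings `n = i + q k + s` over the phases
`i < k` gives `k γ n ≤ ∑_{l<n} γ k ∘ f^l + O(k²)`. A sup-convolution `F ≥ γ k` is Lipschitz and,
by dominated convergence, has `∫ F` as close to `∫ γ k` as we like, so for large `n` the event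
`γ n ≥ n (λ + ε)` lies inside a large-deviation event for the Birkhoff sums of `F`.
-/

open MeasureTheory Filter Topology Set Finset
open scoped NNReal

/-- The iterates of a linear cocycle `A` over a map `f`:
`A^0 x = id` and `A^{n+1} x = A^n (f x) ∘ A x`, so that
`A^n x = A (f^[n-1] x) ∘ ⋯ ∘ A (f x) ∘ A x`. -/
noncomputable def cocycleIter {X : Type*} {d : ℕ} (f : X → X)
    (A : X → (EuclideanSpace ℝ (Fin d) →L[ℝ] EuclideanSpace ℝ (Fin d))) :
    ℕ → X → (EuclideanSpace ℝ (Fin d) →L[ℝ] EuclideanSpace ℝ (Fin d))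
  | 0, _ => ContinuousLinearMap.id ℝ _
  | n + 1, x => cocycleIter f A n (f x) ∘L A x

section RestrictedNorm

variable {V V' V'' : Type*} [NormedAddCommGroup V] [NormedSpace ℝ V]
  [NormedAddCommGroup V'] [NormedSpace ℝ V'] [NormedAddCommGroup V''] [NormedSpace ℝ V'']

noncomputable def restrictedNorm (T : V →L[ℝ] V') (W : Submodule ℝ V) : ℝ :=
  sSup {r : ℝ | ∃ u ∈ W, ‖u‖ = 1 ∧ r = ‖T u‖}

variable {T : V →L[ℝ] V'} {W : Submodule ℝ V}

lemma restrictedNorm_le {a : ℝ} (ha : 0 ≤ a) (h : ∀ u ∈ W, ‖u‖ = 1 → ‖T u‖ ≤ a) :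
    restrictedNorm T W ≤ a :=
  Real.sSup_le (by rintro _ ⟨u, hu, hu1, rfl⟩; exact h u hu hu1) ha

lemma restrictedNorm_nonneg : 0 ≤ restrictedNorm T W :=
  Real.sSup_nonneg (by rintro _ ⟨u, -, -, rfl⟩; exact norm_nonneg _)

lemma restrictedNorm_le_opNorm : restrictedNorm T W ≤ ‖T‖ :=
  restrictedNorm_le (norm_nonneg _) fun u _ hu1 => by simpa [hu1] using T.le_opNorm u

lemma norm_apply_le_restrictedNorm {u : V} (hu : u ∈ W) (hu1 : ‖u‖ = 1) :
    ‖T u‖ ≤ restrictedNorm T W := by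
  refine le_csSup ⟨‖T‖, ?_⟩ ⟨u, hu, hu1, rfl⟩
  rintro _ ⟨v, -, hv1, rfl⟩
  simpa [hv1] using T.le_opNorm v

lemma norm_apply_le_restrictedNorm_mul {v : V} (hv : v ∈ W) :
    ‖T v‖ ≤ restrictedNorm T W * ‖v‖ := by
  rcases eq_or_ne v 0 with rfl | hv0
  · simp
  calc ‖T v‖ = ‖T (‖v‖⁻¹ • v)‖ * ‖v‖ := by
        rw [map_smul, norm_smul, norm_inv, norm_norm]
        field_simp
    _ ≤ restrictedNorm T W * ‖v‖ := by
        gcongr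
        exact norm_apply_le_restrictedNorm (W.smul_mem _ hv) (norm_smul_inv_norm (𝕜 := ℝ) hv0)

lemma restrictedNorm_comp_le {S : V' →L[ℝ] V''} {W' : Submodule ℝ V'}
    (hT : ∀ u ∈ W, T u ∈ W') :
    restrictedNorm (S ∘L T) W ≤ restrictedNorm S W' * restrictedNorm T W :=
  restrictedNorm_le (mul_nonneg restrictedNorm_nonneg restrictedNorm_nonneg) fun u hu hu1 =>
    calc ‖S (T u)‖ ≤ restrictedNorm S W' * ‖T u‖ := norm_apply_le_restrictedNorm_mul (hT u hu)
      _ ≤ restrictedNorm S W' * restrictedNorm T W := by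
          gcongr
          · exact restrictedNorm_nonneg
          · exact norm_apply_le_restrictedNorm hu hu1

lemma Submodule.exists_mem_norm_eq_one (hW : W ≠ ⊥) : ∃ u ∈ W, ‖u‖ = 1 := by
  obtain ⟨v, hv, hv0⟩ := (Submodule.ne_bot_iff W).1 hW
  exact ⟨‖v‖⁻¹ • v, W.smul_mem _ hv, norm_smul_inv_norm (𝕜 := ℝ) hv0⟩

lemma inv_le_restrictedNorm (hW : W ≠ ⊥) {c : ℝ} (hc : 0 < c) (hT : ∀ u, ‖u‖ ≤ c * ‖T u‖) :
    c⁻¹ ≤ restrictedNorm T W := by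
  obtain ⟨u, hu, hu1⟩ := Submodule.exists_mem_norm_eq_one hW
  refine le_trans ?_ (norm_apply_le_restrictedNorm hu hu1)
  rw [inv_le_iff_one_le_mul₀ hc, ← hu1, mul_comm]
  exact hT u

lemma exists_restrictedNorm_eq [FiniteDimensional ℝ V] (hW : W ≠ ⊥) :
    ∃ u ∈ W, ‖u‖ = 1 ∧ restrictedNorm T W = ‖T u‖ := by
  have hset : {r : ℝ | ∃ u ∈ W, ‖u‖ = 1 ∧ r = ‖T u‖} =
      (fun u => ‖T u‖) '' ((W : Set V) ∩ Metric.sphere 0 1) := by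
    ext r
    simp [eq_comm, and_assoc]
  have hcompact : IsCompact ((fun u => ‖T u‖) '' ((W : Set V) ∩ Metric.sphere 0 1)) :=
    ((isCompact_sphere 0 1).inter_left W.closed_of_finiteDimensional).image T.continuous.norm
  obtain ⟨u, hu, hu1⟩ := Submodule.exists_mem_norm_eq_one hW
  have hmem := hcompact.sSup_mem ⟨_, u, ⟨hu, by simpa using hu1⟩, rfl⟩
  rwa [← hset] at hmem

end RestrictedNorm

section Semicontinuity

variable {X V V' : Type*} [TopologicalSpace X] [NormedAddCommGroup V] [NormedSpace ℝ V]
  [NormedAddCommGroup V'] [NormedSpace ℝ V']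

def SeqUpperSemicontinuous (E : X → Submodule ℝ V) : Prop :=
  ∀ x : X, ∀ xs : ℕ → X, Tendsto xs atTop (𝓝 x) →
    ∀ us : ℕ → V, (∀ m, us m ∈ E (xs m)) → (∀ m, ‖us m‖ = 1) →
      ∀ u : V, Tendsto us atTop (𝓝 u) → u ∈ E x

theorem upperSemicontinuous_restrictedNorm [FirstCountableTopology X] [FiniteDimensional ℝ V]
    {T : X → V →L[ℝ] V'} (hT : Continuous T) {E : X → Submodule ℝ V} (hE : ∀ x, E x ≠ ⊥)
    (hEusc : SeqUpperSemicontinuous E) :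
    UpperSemicontinuous fun x => restrictedNorm (T x) (E x) := by
  intro x y hy
  by_contra hnot
  obtain ⟨xs, hxs, hxsy⟩ := frequently_iff_seq_forall.1 (not_eventually.1 hnot)
  choose us hus hus1 hnorm using fun m => exists_restrictedNorm_eq (T := T (xs m)) (hE (xs m))
  obtain ⟨u, hu1, φ, hφ, hlim⟩ :=
    (isCompact_sphere (0 : V) 1).tendsto_subseq fun m => mem_sphere_zero_iff_norm.2 (hus1 m)
  have hxsφ := hxs.comp hφ.tendsto_atTop
  have huE : u ∈ E x := hEusc x _ hxsφ _ (fun m => hus _) (fun m => hus1 _) u hlim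
  have hTlim : Tendsto (fun m => ‖T (xs (φ m)) (us (φ m))‖) atTop (𝓝 ‖T x u‖) :=
    (((hT.comp continuous_fst).clm_apply continuous_snd).norm.tendsto (x, u)).comp
      (hxsφ.prodMk_nhds hlim)
  have hyle : y ≤ ‖T x u‖ :=
    ge_of_tendsto hTlim (Eventually.of_forall fun m => hnorm (φ m) ▸ not_lt.1 (hxsy (φ m)))
  exact hy.not_ge (hyle.trans (norm_apply_le_restrictedNorm huE (mem_sphere_zero_iff_norm.1 hu1)))

lemma UpperSemicontinuous.log {g : X → ℝ} (hg : UpperSemicontinuous g) (hpos : ∀ x, 0 < g x) :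
    UpperSemicontinuous fun x => Real.log (g x) := fun x y hy => by
  filter_upwards [hg x (Real.exp y) ((Real.log_lt_iff_lt_exp (hpos x)).1 hy)] with x' hx'
  exact (Real.log_lt_iff_lt_exp (hpos x')).2 hx'

end Semicontinuity

section Cocycle

variable {X : Type*} {d : ℕ} {f : X → X}
  {A : X → (EuclideanSpace ℝ (Fin d) →L[ℝ] EuclideanSpace ℝ (Fin d))}

lemma cocycleIter_add (m n : ℕ) (x : X) :
    cocycleIter f A (m + n) x = cocycleIter f A n (f^[m] x) ∘L cocycleIter f A m x := by
  induction m generalizing x with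
  | zero => simp [cocycleIter]
  | succ m ih =>
    rw [Nat.add_right_comm]
    exact congrArg (· ∘L A x) (ih (f x))

lemma cocycleIter_mem {E : X → Submodule ℝ (EuclideanSpace ℝ (Fin d))}
    (hE : ∀ x, ∀ u ∈ E x, A x u ∈ E (f x)) (n : ℕ) {x : X} {u : EuclideanSpace ℝ (Fin d)}
    (hu : u ∈ E x) : cocycleIter f A n x u ∈ E (f^[n] x) := by
  induction n generalizing x u with
  | zero => exact hu
  | succ n ih => exact ih (hE x u hu)

lemma norm_cocycleIter_le {K : ℝ} (hK : ∀ x, ‖A x‖ ≤ K) (n : ℕ) (x : X) :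
    ‖cocycleIter f A n x‖ ≤ K ^ n := by
  induction n generalizing x with
  | zero => exact ContinuousLinearMap.norm_id_le
  | succ n ih =>
    calc ‖cocycleIter f A n (f x) ∘L A x‖ ≤ ‖cocycleIter f A n (f x)‖ * ‖A x‖ :=
          ContinuousLinearMap.opNorm_comp_le _ _
      _ ≤ K ^ n * K := mul_le_mul (ih _) (hK x) (norm_nonneg _) ((norm_nonneg _).trans (ih (f x)))
      _ = K ^ (n + 1) := (pow_succ K n).symm

lemma norm_le_pow_mul_norm_cocycleIter
    {Ainv : X → (EuclideanSpace ℝ (Fin d) →L[ℝ] EuclideanSpace ℝ (Fin d))}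
    (hAinv : ∀ x, Ainv x ∘L A x = ContinuousLinearMap.id ℝ _) {K : ℝ} (hK : ∀ x, ‖Ainv x‖ ≤ K)
    (n : ℕ) (x : X) (u : EuclideanSpace ℝ (Fin d)) :
    ‖u‖ ≤ K ^ n * ‖cocycleIter f A n x u‖ := by
  induction n generalizing x u with
  | zero => simp [cocycleIter]
  | succ n ih =>
    have hK0 : 0 ≤ K := (norm_nonneg _).trans (hK x)
    calc ‖u‖ = ‖Ainv x (A x u)‖ := by rw [← ContinuousLinearMap.comp_apply, hAinv x]; rfl
      _ ≤ K * ‖A x u‖ := (Ainv x).le_of_opNorm_le (hK x) _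
      _ ≤ K * (K ^ n * ‖cocycleIter f A n (f x) (A x u)‖) := by gcongr; exact ih _ _
      _ = K ^ (n + 1) * ‖cocycleIter f A (n + 1) x u‖ := by rw [pow_succ', mul_assoc]; rfl

lemma continuous_cocycleIter [TopologicalSpace X] (hf : Continuous f) (hA : Continuous A)
    (n : ℕ) : Continuous (cocycleIter f A n) := by
  induction n with
  | zero => exact continuous_const
  | succ n ih => exact (ih.comp hf).clm_comp hA

end Cocycle

section LipschitzMajorant

variable {X : Type*} [PseudoMetricSpace X] {g : X → ℝ} {B : ℝ}

noncomputable def lipschitzMajorant (g : X → ℝ) (m : ℝ≥0) (x : X) : ℝ :=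
  ⨆ y, g y - m * dist x y

lemma bddAbove_range_sub_mul_dist (hB : ∀ x, g x ≤ B) (m : ℝ≥0) (x : X) :
    BddAbove (range fun y => g y - m * dist x y) := by
  refine ⟨B, ?_⟩
  rintro _ ⟨y, rfl⟩
  have := hB y
  have : 0 ≤ (m : ℝ) * dist x y := by positivity
  linarith

lemma le_lipschitzMajorant (hB : ∀ x, g x ≤ B) (m : ℝ≥0) (x : X) :
    g x ≤ lipschitzMajorant g m x :=
  le_ciSup_of_le (bddAbove_range_sub_mul_dist hB m x) x (by simp)

lemma lipschitzMajorant_le (hB : ∀ x, g x ≤ B) (m : ℝ≥0) (x : X) :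
    lipschitzMajorant g m x ≤ B :=
  have : Nonempty X := ⟨x⟩
  ciSup_le fun y => (sub_le_self _ (by positivity)).trans (hB y)

lemma lipschitzWith_lipschitzMajorant (hB : ∀ x, g x ≤ B) (m : ℝ≥0) :
    LipschitzWith m (lipschitzMajorant g m) := by
  refine LipschitzWith.of_le_add_mul m fun x y => ?_
  have : Nonempty X := ⟨x⟩
  refine ciSup_le fun z => ?_
  have hz := le_ciSup (bddAbove_range_sub_mul_dist hB m y) z
  have htri : dist y z ≤ dist x y + dist x z := dist_triangle_left y z x
  have : (m : ℝ) * dist y z ≤ m * dist x y + m * dist x z := by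
    rw [← mul_add]; gcongr
  simp only [lipschitzMajorant] at hz ⊢
  linarith

theorem tendsto_lipschitzMajorant (hg : UpperSemicontinuous g) (hB : ∀ x, g x ≤ B) (x : X) :
    Tendsto (fun m => lipschitzMajorant g m x) atTop (𝓝 (g x)) := by
  refine tendsto_order.2 ⟨fun a ha => Eventually.of_forall fun m =>
    ha.trans_le (le_lipschitzMajorant hB m x), fun a ha => ?_⟩
  obtain ⟨b, hxb, hba⟩ := exists_between ha
  obtain ⟨δ, hδ, hball⟩ := Metric.eventually_nhds_iff.1 (hg x b hxb)
  filter_upwards [eventually_ge_atTop (Real.toNNReal ((B - b) / δ))] with m hm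
  have hmδ : B - b ≤ m * δ := by
    rw [← div_le_iff₀ hδ]
    exact Real.toNNReal_le_iff_le_coe.1 hm
  refine lt_of_le_of_lt ?_ hba
  have : Nonempty X := ⟨x⟩
  refine ciSup_le fun y => ?_
  rcases lt_or_ge (dist y x) δ with hy | hy
  · have := hball hy
    have : 0 ≤ (m : ℝ) * dist x y := by positivity
    linarith
  · have := hB y
    have : (m : ℝ) * δ ≤ m * dist x y := by rw [dist_comm]; gcongr
    linarith

theorem UpperSemicontinuous.exists_lipschitzWith_ge_integral_lt [MeasurableSpace X]
    [OpensMeasurableSpace X] {μ : Measure X} [IsFiniteMeasure μ] (hg : UpperSemicontinuous g)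
    (hB : ∀ x, |g x| ≤ B) {δ : ℝ} (hδ : 0 < δ) :
    ∃ K : ℝ≥0, ∃ F : X → ℝ, LipschitzWith K F ∧ g ≤ F ∧ ∫ x, F x ∂μ < ∫ x, g x ∂μ + δ := by
  have hB' : ∀ x, g x ≤ B := fun x => (abs_le.1 (hB x)).2
  have hbound : ∀ (m : ℕ) x, ‖lipschitzMajorant g m x‖ ≤ B := fun m x =>
    abs_le.2 ⟨(abs_le.1 (hB x)).1.trans (le_lipschitzMajorant hB' m x),
      lipschitzMajorant_le hB' m x⟩
  have hlim : Tendsto (fun m : ℕ => ∫ x, lipschitzMajorant g m x ∂μ) atTop (𝓝 (∫ x, g x ∂μ)) :=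
    tendsto_integral_of_dominated_convergence (fun _ => B)
      (fun m => (lipschitzWith_lipschitzMajorant hB' m).continuous.aestronglyMeasurable)
      (integrable_const B) (fun m => Eventually.of_forall (hbound m))
      (Eventually.of_forall fun x =>
        (tendsto_lipschitzMajorant hg hB' x).comp tendsto_natCast_atTop_atTop)
  obtain ⟨m, hm⟩ := (hlim.eventually (gt_mem_nhds (lt_add_of_pos_right _ hδ))).exists
  exact ⟨m, _, lipschitzWith_lipschitzMajorant hB' m, le_lipschitzMajorant hB' m, hm⟩

end LipschitzMajorant

section LargeDeviations

variable {X : Type*} [MeasurableSpace X]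

def ExponentiallySmall (μ : Measure X) (s : ℕ → Set X) : Prop :=
  ∃ C > (0 : ℝ), ∃ c > (0 : ℝ), ∀ n : ℕ, 1 ≤ n → μ (s n) ≤ ENNReal.ofReal (C * Real.exp (-c * n))

def HasExpLargeDeviations [PseudoMetricSpace X] (μ : Measure X) (f : X → X) : Prop :=
  ∀ F : X → ℝ, (∃ K : NNReal, LipschitzWith K F) → ∀ ε : ℝ, 0 < ε →
    ExponentiallySmall μ fun n =>
      {x | (n : ℝ) * ((∫ y, F y ∂μ) + ε) ≤ ∑ l ∈ Finset.range n, F (f^[l] x)}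

lemma ExponentiallySmall.of_eventually_subset {μ : Measure X} [IsProbabilityMeasure μ]
    {s t : ℕ → Set X} (ht : ExponentiallySmall μ t) (N : ℕ) (hst : ∀ n, N ≤ n → s n ⊆ t n) :
    ExponentiallySmall μ s := by
  obtain ⟨C, hC, c, hc, htC⟩ := ht
  refine ⟨C + Real.exp (c * N), by positivity, c, hc, fun n hn => ?_⟩
  rcases le_or_gt N n with hNn | hnN
  · refine (measure_mono (hst n hNn)).trans ((htC n hn).trans (ENNReal.ofReal_le_ofReal ?_))
    gcongr
    exact le_add_of_nonneg_right (Real.exp_pos _).le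
  · refine prob_le_one.trans (ENNReal.one_le_ofReal.2 ?_)
    calc (1 : ℝ) ≤ Real.exp (c * N) * Real.exp (-c * n) := by
          rw [← Real.exp_add]
          exact Real.one_le_exp (by nlinarith [(Nat.cast_lt (α := ℝ)).2 hnN])
      _ ≤ (C + Real.exp (c * N)) * Real.exp (-c * n) := by
          gcongr
          exact le_add_of_nonneg_left hC.le

end LargeDeviations

lemma Finset.sum_range_sum_range_add_mul {M : Type*} [AddCommMonoid M] (h : ℕ → M) (k q : ℕ) :
    ∑ i ∈ range k, ∑ j ∈ range q, h (i + j * k) = ∑ l ∈ range (q * k), h l := by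
  induction q with
  | zero => simp
  | succ q ih =>
    rw [Nat.succ_mul, Finset.sum_range_add, ← ih, ← Finset.sum_add_distrib]
    refine Finset.sum_congr rfl fun i _ => ?_
    rw [Finset.sum_range_succ, add_comm i]

section SubadditiveCocycle

variable {X : Type*} {f : X → X} {γ : ℕ → X → ℝ}

def IsSubadditiveCocycle (f : X → X) (γ : ℕ → X → ℝ) : Prop :=
  ∀ m n x, γ (m + n) x ≤ γ m x + γ n (f^[m] x)

namespace IsSubadditiveCocycle

lemma le_add_sum (hγ : IsSubadditiveCocycle f γ) (k q m : ℕ) (x : X) :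
    γ (m + q * k) x ≤ γ m x + ∑ j ∈ range q, γ k (f^[m + j * k] x) := by
  induction q with
  | zero => simp
  | succ q ih =>
    rw [Finset.sum_range_succ, Nat.succ_mul, ← add_assoc]
    linarith [hγ (m + q * k) k x]

lemma le_sum_add (hγ : IsSubadditiveCocycle f γ) {L : ℝ} (hL : ∀ n x, γ n x ≤ n * L)
    (k q i r : ℕ) (x : X) :
    γ (i + q * k + r) x ≤ ∑ j ∈ range q, γ k (f^[i + j * k] x) + ((i + r : ℕ) : ℝ) * L := by
  have hsplit := hγ (i + q * k) r x
  have hhead := hγ.le_add_sum k q i x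
  have hi := hL i x
  have hr := hL r (f^[i + q * k] x)
  push_cast
  linarith

theorem mul_le_sum_add (hγ : IsSubadditiveCocycle f γ) {L : ℝ} (hL : ∀ n x, |γ n x| ≤ n * L)
    {k n : ℕ} (hk : 0 < k) (hkn : k ≤ n) (x : X) :
    k * γ n x ≤ ∑ l ∈ range n, γ k (f^[l] x) + 4 * k ^ 2 * L := by
  obtain ⟨q, s, rfl, hks, hs⟩ : ∃ q s, n = q * k + s ∧ k ≤ s ∧ s ≤ 2 * k := by
    obtain ⟨q, hq⟩ := Nat.exists_eq_succ_of_ne_zero (Nat.div_pos hkn hk).ne'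
    have hdiv := Nat.div_add_mod' n k
    rw [hq, Nat.succ_mul] at hdiv
    exact ⟨q, k + n % k, by omega, by omega, by have := Nat.mod_lt n hk; omega⟩
  have hL0 : 0 ≤ L := by simpa using (abs_nonneg _).trans (hL 1 x)
  have hphase : ∀ i ∈ range k,
      γ (q * k + s) x ≤ ∑ j ∈ range q, γ k (f^[i + j * k] x) + s * L := by
    intro i hi
    have hik := mem_range.1 hi
    have := hγ.le_sum_add (fun m y => (le_abs_self _).trans (hL m y)) k q i (s - i) x
    rwa [show i + q * k + (s - i) = q * k + s by omega, show i + (s - i) = s by omega] at this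
  have hhead := Finset.sum_le_sum hphase
  simp only [sum_const, card_range, nsmul_eq_mul, sum_add_distrib,
    sum_range_sum_range_add_mul (fun l => γ k (f^[l] x))] at hhead
  have htail : -(s * (k * L)) ≤ ∑ j ∈ range s, γ k (f^[q * k + j] x) := by
    simpa using Finset.sum_le_sum fun j (_ : j ∈ range s) =>
      neg_le_of_abs_le (hL k (f^[q * k + j] x))
  rw [sum_range_add]
  have hs' : (s : ℝ) ≤ 2 * k := by exact_mod_cast hs
  nlinarith [mul_nonneg (mul_nonneg (Nat.cast_nonneg k) hL0) (sub_nonneg.2 hs')]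

end IsSubadditiveCocycle

end SubadditiveCocycle

theorem IsSubadditiveCocycle.exponentiallySmall {X : Type*} [PseudoMetricSpace X]
    [MeasurableSpace X] [OpensMeasurableSpace X] {μ : Measure X} [IsProbabilityMeasure μ]
    {f : X → X} (hLD : HasExpLargeDeviations μ f) {γ : ℕ → X → ℝ}
    (hγ : IsSubadditiveCocycle f γ) {L : ℝ} (hL : ∀ n x, |γ n x| ≤ n * L) {k : ℕ} (hk : 1 ≤ k)
    (husc : UpperSemicontinuous (γ k)) {a : ℝ} (ha : 1 / (k : ℝ) * ∫ x, γ k x ∂μ < a) :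
    ExponentiallySmall μ fun n => {x | (n : ℝ) * a ≤ γ n x} := by
  have hk0 : (0 : ℝ) < k := by exact_mod_cast hk
  set δ := k * a - ∫ x, γ k x ∂μ
  have hδ : 0 < δ := by
    rw [one_div, inv_mul_lt_iff₀ hk0] at ha
    linarith
  obtain ⟨K, F, hF, hγF, hFint⟩ :=
    husc.exists_lipschitzWith_ge_integral_lt (μ := μ) (hL k) (by positivity : 0 < δ / 3)
  refine (hLD F ⟨K, hF⟩ (δ / 3) (by positivity)).of_eventually_subset
    (max k ⌈12 * k ^ 2 * L / δ⌉₊) fun n hn x (hx : n * a ≤ γ n x) => ?_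
  have hkey := hγ.mul_le_sum_add hL hk (le_of_max_le_left hn) x
  have hsum : ∑ l ∈ range n, γ k (f^[l] x) ≤ ∑ l ∈ range n, F (f^[l] x) :=
    sum_le_sum fun l _ => hγF _
  have hnδ : 12 * k ^ 2 * L ≤ n * δ :=
    (div_le_iff₀ hδ).1 ((Nat.le_ceil _).trans (by exact_mod_cast le_of_max_le_right hn))
  show n * ((∫ y, F y ∂μ) + δ / 3) ≤ ∑ l ∈ range n, F (f^[l] x)
  calc n * ((∫ y, F y ∂μ) + δ / 3) ≤ n * (k * a - δ / 3) := by gcongr; linarith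
    _ = k * (n * a) - n * δ / 3 := by ring
    _ ≤ k * γ n x - n * δ / 3 := by gcongr
    _ ≤ ∑ l ∈ range n, F (f^[l] x) := by linarith

section LogRestrictedNorm

variable {X : Type*} {d : ℕ} {f : X → X}
  {A Ainv : X → (EuclideanSpace ℝ (Fin d) →L[ℝ] EuclideanSpace ℝ (Fin d))}
  {E : X → Submodule ℝ (EuclideanSpace ℝ (Fin d))} {K : ℝ}

lemma inv_pow_le_restrictedNorm_cocycleIter
    (hAinv : ∀ x, Ainv x ∘L A x = ContinuousLinearMap.id ℝ _) (hAinvK : ∀ x, ‖Ainv x‖ ≤ K)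
    (hK : 0 < K) (hE : ∀ x, E x ≠ ⊥) (n : ℕ) (x : X) :
    (K ^ n)⁻¹ ≤ restrictedNorm (cocycleIter f A n x) (E x) :=
  inv_le_restrictedNorm (hE x) (pow_pos hK n) (norm_le_pow_mul_norm_cocycleIter hAinv hAinvK n x)

lemma abs_log_restrictedNorm_cocycleIter_le
    (hAinv : ∀ x, Ainv x ∘L A x = ContinuousLinearMap.id ℝ _) (hAK : ∀ x, ‖A x‖ ≤ K)
    (hAinvK : ∀ x, ‖Ainv x‖ ≤ K) (hK : 0 < K) (hE : ∀ x, E x ≠ ⊥) (n : ℕ) (x : X) :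
    |Real.log (restrictedNorm (cocycleIter f A n x) (E x))| ≤ n * Real.log K := by
  have hlow := inv_pow_le_restrictedNorm_cocycleIter (f := f) hAinv hAinvK hK hE n x
  have hup := (restrictedNorm_le_opNorm (W := E x)).trans (norm_cocycleIter_le (f := f) hAK n x)
  rw [abs_le, ← Real.log_pow, ← Real.log_inv]
  exact ⟨Real.log_le_log (by positivity) hlow,
    Real.log_le_log ((inv_pos.2 (pow_pos hK n)).trans_le hlow) hup⟩

lemma isSubadditiveCocycle_log_restrictedNorm (hE : ∀ x, ∀ u ∈ E x, A x u ∈ E (f x))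
    (hpos : ∀ n x, 0 < restrictedNorm (cocycleIter f A n x) (E x)) :
    IsSubadditiveCocycle f fun n x => Real.log (restrictedNorm (cocycleIter f A n x) (E x)) :=
  fun m n x => calc
    _ ≤ Real.log (restrictedNorm (cocycleIter f A n (f^[m] x)) (E (f^[m] x)) *
          restrictedNorm (cocycleIter f A m x) (E x)) := by
        refine Real.log_le_log (hpos _ _) ?_
        rw [cocycleIter_add]
        exact restrictedNorm_comp_le fun u hu => cocycleIter_mem hE m hu
    _ = _ := by rw [Real.log_mul (hpos _ _).ne' (hpos _ _).ne', add_comm]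

end LogRestrictedNorm

theorem oseledets_restricted_norm_exponential_large_deviations_general
    {X : Type*} [MetricSpace X] [CompactSpace X] [MeasurableSpace X] [BorelSpace X]
    (f : X → X) (hfc : Continuous f)
    (μ : Measure X) [IsProbabilityMeasure μ]
    (hLD : ∀ F : X → ℝ, (∃ K : NNReal, LipschitzWith K F) → ∀ ε : ℝ, 0 < ε →
      ∃ C > (0 : ℝ), ∃ c > (0 : ℝ), ∀ n : ℕ, 1 ≤ n →
        μ {x | (n : ℝ) * ((∫ y, F y ∂μ) + ε) ≤ ∑ l ∈ Finset.range n, F (f^[l] x)} ≤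
          ENNReal.ofReal (C * Real.exp (-c * n)))
    (d : ℕ)
    (A Ainv : X → (EuclideanSpace ℝ (Fin d) →L[ℝ] EuclideanSpace ℝ (Fin d)))
    (hAc : Continuous A) (hAinvc : Continuous Ainv)
    (hAinv : ∀ x : X,
      (A x) ∘L (Ainv x) = ContinuousLinearMap.id ℝ (EuclideanSpace ℝ (Fin d)) ∧
      (Ainv x) ∘L (A x) = ContinuousLinearMap.id ℝ (EuclideanSpace ℝ (Fin d)))
    (E : X → Submodule ℝ (EuclideanSpace ℝ (Fin d)))
    (hEne : ∀ x, E x ≠ ⊥)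
    (hEinvariant : ∀ x : X, ∀ u ∈ E x, A x u ∈ E (f x))
    (hEusc : ∀ x : X, ∀ xs : ℕ → X,
      Filter.Tendsto xs Filter.atTop (nhds x) →
      ∀ us : ℕ → EuclideanSpace ℝ (Fin d),
        (∀ m, us m ∈ E (xs m)) → (∀ m, ‖us m‖ = 1) →
        ∀ u : EuclideanSpace ℝ (Fin d),
          Filter.Tendsto us Filter.atTop (nhds u) → u ∈ E x)
    (γ : ℕ → X → ℝ)
    (hγ : ∀ n x, γ n x =
      Real.log (sSup {r : ℝ | ∃ u ∈ E x, ‖u‖ = 1 ∧ r = ‖cocycleIter f A n x u‖}))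
    (lam : ℝ)
    (hlam : lam = sInf {r : ℝ | ∃ n : ℕ, 1 ≤ n ∧ r = (1 / (n : ℝ)) * ∫ x, γ n x ∂μ}) :
    ∀ ε : ℝ, 0 < ε → ∃ C > (0 : ℝ), ∃ c > (0 : ℝ), ∀ n : ℕ, 1 ≤ n →
      μ {x | (n : ℝ) * (lam + ε) ≤ γ n x} ≤ ENNReal.ofReal (C * Real.exp (-c * n)) := by
  intro ε hε
  obtain ⟨K, hK, hAK, hAinvK⟩ : ∃ K > 0, (∀ x, ‖A x‖ ≤ K) ∧ ∀ x, ‖Ainv x‖ ≤ K := by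
    obtain ⟨K₁, hK₁⟩ := isCompact_univ.exists_bound_of_continuousOn hAc.continuousOn
    obtain ⟨K₂, hK₂⟩ := isCompact_univ.exists_bound_of_continuousOn hAinvc.continuousOn
    exact ⟨max 1 (max K₁ K₂), by positivity, fun x => (hK₁ x trivial).trans (by simp),
      fun x => (hK₂ x trivial).trans (by simp)⟩
  have hAinv' x := (hAinv x).2
  obtain rfl : γ = fun n x => Real.log (restrictedNorm (cocycleIter f A n x) (E x)) :=
    funext fun n => funext (hγ n)
  have hpos n x : 0 < restrictedNorm (cocycleIter f A n x) (E x) :=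
    (inv_pos.2 (pow_pos hK n)).trans_le
      (inv_pow_le_restrictedNorm_cocycleIter hAinv' hAinvK hK hEne n x)
  have hlt := lt_add_of_pos_right lam hε
  nth_rw 1 [hlam] at hlt
  obtain ⟨_, ⟨k, hk, rfl⟩, hklam⟩ := exists_lt_of_csInf_lt (by exact ⟨_, 1, le_rfl, rfl⟩) hlt
  exact (isSubadditiveCocycle_log_restrictedNorm hEinvariant hpos).exponentiallySmall hLD
    (abs_log_restrictedNorm_cocycleIter_le hAinv' hAK hAinvK hK hEne) hk
    ((upperSemicontinuous_restrictedNorm (continuous_cocycleIter hfc hAc k) hEne hEusc).log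
      (hpos k)) hklam

/-- Let `X` be a compact metric space, `f : X → X` continuous, and `μ` an
`f`-invariant Borel probability measure satisfying exponential large deviations for
Lipschitz observables. Let `A` be a continuous cocycle of invertible linear maps on `ℝ^d`
with continuous inverse `Ainv`, leaving invariant a sequentially upper semicontinuous
family `E` of nonzero subspaces. With `γ n x = log (sup { ‖(A^n x) u‖ : u ∈ E x, ‖u‖ = 1 })`
and `λ = inf_{n ≥ 1} (1/n) ∫ γ n dμ`, for every `ε > 0` there exist `C, c > 0` with
`μ { x : γ n x ≥ n (λ + ε) } ≤ C exp (-c n)` for all `n ≥ 1`. -/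
theorem oseledets_restricted_norm_exponential_large_deviations
    {X : Type*} [MetricSpace X] [CompactSpace X] [MeasurableSpace X] [BorelSpace X]
    (f : X → X) (hfc : Continuous f)
    (μ : Measure X) [IsProbabilityMeasure μ] (hf : MeasurePreserving f μ μ)
    (hLD : ∀ F : X → ℝ, (∃ K : NNReal, LipschitzWith K F) → ∀ ε : ℝ, 0 < ε →
      ∃ C > (0 : ℝ), ∃ c > (0 : ℝ), ∀ n : ℕ, 1 ≤ n →
        μ {x | (n : ℝ) * ((∫ y, F y ∂μ) + ε) ≤ ∑ l ∈ Finset.range n, F (f^[l] x)} ≤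
          ENNReal.ofReal (C * Real.exp (-c * n)))
    (d : ℕ) (hd : 1 ≤ d)
    (A Ainv : X → (EuclideanSpace ℝ (Fin d) →L[ℝ] EuclideanSpace ℝ (Fin d)))
    (hAc : Continuous A) (hAinvc : Continuous Ainv)
    (hAinv : ∀ x : X,
      (A x) ∘L (Ainv x) = ContinuousLinearMap.id ℝ (EuclideanSpace ℝ (Fin d)) ∧
      (Ainv x) ∘L (A x) = ContinuousLinearMap.id ℝ (EuclideanSpace ℝ (Fin d)))
    (E : X → Submodule ℝ (EuclideanSpace ℝ (Fin d)))
    (hEne : ∀ x, E x ≠ ⊥)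
    (hEinvariant : ∀ x : X, ∀ u ∈ E x, A x u ∈ E (f x))
    (hEusc : ∀ x : X, ∀ xs : ℕ → X,
      Filter.Tendsto xs Filter.atTop (nhds x) →
      ∀ us : ℕ → EuclideanSpace ℝ (Fin d),
        (∀ m, us m ∈ E (xs m)) → (∀ m, ‖us m‖ = 1) →
        ∀ u : EuclideanSpace ℝ (Fin d),
          Filter.Tendsto us Filter.atTop (nhds u) → u ∈ E x)
    (γ : ℕ → X → ℝ)
    (hγ : ∀ n x, γ n x =
      Real.log (sSup {r : ℝ | ∃ u ∈ E x, ‖u‖ = 1 ∧ r = ‖cocycleIter f A n x u‖}))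
    (lam : ℝ)
    (hlam : lam = sInf {r : ℝ | ∃ n : ℕ, 1 ≤ n ∧ r = (1 / (n : ℝ)) * ∫ x, γ n x ∂μ}) :
    ∀ ε : ℝ, 0 < ε → ∃ C > (0 : ℝ), ∃ c > (0 : ℝ), ∀ n : ℕ, 1 ≤ n →
      μ {x | (n : ℝ) * (lam + ε) ≤ γ n x} ≤ ENNReal.ofReal (C * Real.exp (-c * n)) :=
  oseledets_restricted_norm_exponential_large_deviations_general f hfc μ hLD d A Ainv hAc hAinvc
    hAinv E hEne hEinvariant hEusc γ hγ lam hlam
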